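/- arXiv:1412.6745 — 2 statements merged into one kernel-verified Lean document; each statement's English description precedes it below -/
import Mathlib

section
/- Let f : ℝ → ℝ be increasing, cash sub-additive and convex. Define β̂ : ℝ² → ℝ by β̂(h, x) = f(h − x) + x. Then β̂ is increasing in each coordinate (in the sense that h = y + x₁, v = u + x₂ with y ≥ u and x₁ ≥ x₂ implies β̂(h, x₁) ≥ β̂(v, x₂)), translationally invariant (β̂(h + m, x + m) = β̂(h, x) + m for all m ∈ ℝ), and convex on ℝ². -/
open Set

theorem ConvexOn.comp_sub_add_snd {𝕜 : Type*} [Field 𝕜] [LinearOrder 𝕜] [IsStrictOrderedRing 𝕜]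
    {f : 𝕜 → 𝕜} (hf : ConvexOn 𝕜 univ f) :
    ConvexOn 𝕜 univ (fun p : 𝕜 × 𝕜 => f (p.1 - p.2) + p.2) :=
  (hf.comp_linearMap (LinearMap.fst 𝕜 𝕜 𝕜 - LinearMap.snd 𝕜 𝕜 𝕜)).add
    ((LinearMap.snd 𝕜 𝕜 𝕜).convexOn convex_univ)

theorem beta_hat_props_general (f : ℝ → ℝ)
    (hmono : ∀ y v : ℝ, v ≤ y → f v ≤ f y)
    (hconv : ConvexOn ℝ Set.univ f) :
    (∀ y u x₁ x₂ : ℝ, u ≤ y → x₂ ≤ x₁ →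
        f ((u + x₂) - x₂) + x₂ ≤ f ((y + x₁) - x₁) + x₁) ∧
    (∀ h x m : ℝ, f ((h + m) - (x + m)) + (x + m) = (f (h - x) + x) + m) ∧
    ConvexOn ℝ Set.univ (fun p : ℝ × ℝ => f (p.1 - p.2) + p.2) := by
  refine ⟨fun y u x₁ x₂ hy hx => ?_, fun h x m => ?_, hconv.comp_sub_add_snd⟩
  · simpa only [add_sub_cancel_right] using add_le_add (hmono y u hy) hx
  · rw [add_sub_add_right_eq_sub]
    ring

/-- For `f : ℝ → ℝ` increasing, cash sub-additive and convex, the map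
`β̂ (h, x) = f (h - x) + x` is increasing in the stated sense, translationally
invariant, and convex on `ℝ²`. -/
theorem beta_hat_props (f : ℝ → ℝ)
    (hmono : ∀ y v : ℝ, v ≤ y → f v ≤ f y)
    (hsub : ∀ y m : ℝ, 0 ≤ m → f y - m ≤ f (y + m))
    (hconv : ConvexOn ℝ Set.univ f) :
    (∀ y u x₁ x₂ : ℝ, u ≤ y → x₂ ≤ x₁ →
        f ((u + x₂) - x₂) + x₂ ≤ f ((y + x₁) - x₁) + x₁) ∧
    (∀ h x m : ℝ, f ((h + m) - (x + m)) + (x + m) = (f (h - x) + x) + m) ∧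
    ConvexOn ℝ Set.univ (fun p : ℝ × ℝ => f (p.1 - p.2) + p.2) :=
  beta_hat_props_general f hmono hconv
end

section
/- Multivariate case: let Z_𝐲(ω) = Σ_{i=1}^n Z^i_{y_i}(ω) where each Z^i_{y_i} is pointwise decreasing and concave in y_i ∈ ℝ, and let ρ be a convex monetary risk measure. Then β(𝐲) := ρ(Z_𝐲) on the positive orthant of ℝⁿ is increasing monotonic (𝐲 ≥ 𝐯 componentwise implies β(𝐲) ≥ β(𝐯)), cash sub-additive (β(𝐲 + m𝐞) ≥ β(𝐲) − m for m ≥ 0 and 𝐞 = (1,…,1)), and convex. -/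
/-- Multivariate case: with `Z_𝐲(ω) = Σᵢ Zⁱ_{yᵢ}(ω)`, each `Zⁱ`
pointwise decreasing and concave in `yᵢ`, and `ρ` a convex monetary risk measure,
`β 𝐲 := ρ (Z_𝐲)` is increasing monotonic, cash sub-additive (`β(𝐲 + m𝐞) ≥ β 𝐲 − m`)
and convex on the positive orthant. -/
theorem multivariate_illiquidity_props {Ω : Type*} {n : ℕ} (ρ : (Ω → ℝ) → ℝ)
    (hmono : ∀ V U : Ω → ℝ, (∀ ω, V ω ≤ U ω) → ρ U ≤ ρ V)
    (hcash : ∀ (V : Ω → ℝ) (m : ℝ), ρ (fun ω => V ω + m) = ρ V - m)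
    (hconv : ∀ (V U : Ω → ℝ) (l : ℝ), 0 ≤ l → l ≤ 1 →
      ρ (fun ω => l * V ω + (1 - l) * U ω) ≤ l * ρ V + (1 - l) * ρ U)
    (Z : Fin n → ℝ → Ω → ℝ)
    (hZdec : ∀ i, ∀ y v : ℝ, v ≤ y → ∀ ω, Z i y ω ≤ Z i v ω)
    (hZconc : ∀ i, ∀ (y v l : ℝ), 0 ≤ l → l ≤ 1 →
      ∀ ω, l * Z i y ω + (1 - l) * Z i v ω ≤ Z i (l * y + (1 - l) * v) ω)
    (β : (Fin n → ℝ) → ℝ)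
    (hβ : ∀ y : Fin n → ℝ, β y = ρ (fun ω => ∑ i, Z i (y i) ω)) :
    (∀ y v : Fin n → ℝ, (∀ i, 0 < v i) → (∀ i, v i ≤ y i) → β v ≤ β y) ∧
    (∀ (y : Fin n → ℝ) (m : ℝ), (∀ i, 0 < y i) → 0 ≤ m →
      β y - m ≤ β (fun i => y i + m)) ∧
    (∀ (y v : Fin n → ℝ) (l : ℝ), (∀ i, 0 < y i) → (∀ i, 0 < v i) →
      0 ≤ l → l ≤ 1 →
      β (fun i => l * y i + (1 - l) * v i) ≤ l * β y + (1 - l) * β v) := by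
  refine ⟨?_, ?_, ?_⟩
  · intro y v _ hvy
    rw [hβ, hβ]
    exact hmono _ _ (fun ω => Finset.sum_le_sum fun i _ => hZdec i (y i) (v i) (hvy i) ω)
  · intro y m _ hm
    have h1 : β y ≤ β (fun i => y i + m) := by
      rw [hβ, hβ]
      exact hmono _ _ (fun ω => Finset.sum_le_sum fun i _ =>
        hZdec i (y i + m) (y i) (by linarith) ω)
    linarith
  · intro y v l _ _ hl0 hl1
    rw [hβ, hβ, hβ]
    calc ρ (fun ω => ∑ i, Z i (l * y i + (1 - l) * v i) ω)
        ≤ ρ (fun ω => l * (∑ i, Z i (y i) ω) + (1 - l) * (∑ i, Z i (v i) ω)) := by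
          apply hmono
          intro ω
          rw [Finset.mul_sum, Finset.mul_sum, ← Finset.sum_add_distrib]
          exact Finset.sum_le_sum fun i _ => hZconc i (y i) (v i) l hl0 hl1 ω
      _ ≤ l * ρ (fun ω => ∑ i, Z i (y i) ω) + (1 - l) * ρ (fun ω => ∑ i, Z i (v i) ω) :=
          hconv _ _ l hl0 hl1
end
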